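/- Let D be a positive integer, r ∈ ℤ, and μ ∈ {1/2, 1/6}. For all integers a, b, c, d with ad − bc = 1, a ≡ d ≡ 1 (mod 18D²) and b ≡ c ≡ 0 (mod 18D²), and every z ∈ ℂ with Im z > 0: θ_{r,μ}((az+b)/(cz+d)) · θ₀(z) = θ_{r,μ}(z) · θ₀((az+b)/(cz+d)). (Equivalently, the ratio f_{r,μ} = θ_{r,μ}/θ₀ is a modular function invariant under the principal congruence subgroup Γ(18D²).) -/

import Mathlib

open Complex

/-- For a fixed positive integer `D`, `r ∈ ℤ`, `μ ∈ ℝ`: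
`θ_{r,μ}(z) = ∑_{n∈ℤ} (−1)ⁿ exp(πi(n + r/D − μ)²z)`. -/
noncomputable def thetaRMu (D : ℕ) (r : ℤ) (μ : ℝ) (z : ℂ) : ℂ :=
  ∑' n : ℤ, (-1 : ℂ) ^ n *
    Complex.exp (Real.pi * Complex.I * ((n : ℂ) + (r : ℂ) / (D : ℂ) - (μ : ℂ)) ^ 2 * z)

/-- `θ₀(z) = ∑_{n∈ℤ} (−1)ⁿ exp(πi(n − 1/6)²z)`. -/
noncomputable def theta0 (z : ℂ) : ℂ :=
  ∑' n : ℤ, (-1 : ℂ) ^ n * Complex.exp (Real.pi * Complex.I * ((n : ℂ) - 1/6) ^ 2 * z)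

/-! Both sides are Jacobi theta functions with characteristics `(p, 1/2)`, with `p = r/D - μ`
for `θ_{r,μ}` and `p = -1/6` for `θ₀`. Running Euclid's algorithm on the lower row of
`γ = (a b; c d) ∈ SL₂(ℤ)`, the translation and inversion formulas give
`θ[p, q](γτ) = u(τ) e^{πi Q_γ(p, q)} θ[ap + cq + ac/2, bp + dq + bd/2 + m](τ)`
with `u` and `m` independent of the characteristic. When `b, c` are even and `(a - 1)p, bp ∈ ℤ`,
the new characteristic is `(p, 1/2)` up to integers, so `θ[p, 1/2](γτ)` equals `θ[p, 1/2](τ)` times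
`v(τ) e^{πi (ab p² - (a - 1)p)}`. For `γ ≡ 1 mod 18D²` and `p = g/(6D)` this last phase only depends
on `g mod 2`, and `6D(r/D - μ) ≡ 6D(-1/6) mod 2` for `μ ∈ {1/2, 1/6}`; hence both theta functions
acquire the same factor and their ratio is invariant.
-/

open Real

lemma cexp_pi_mul_I_add_two_mul_int (x : ℂ) (n : ℤ) :
    cexp (π * I * (x + 2 * n)) = cexp (π * I * x) := by
  rw [mul_add, Complex.exp_add, show π * I * (2 * n) = n * (2 * π * I) by ring,
    Complex.exp_int_mul_two_pi_mul_I, mul_one]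

noncomputable def thetaChar (p q : ℝ) (τ : ℂ) : ℂ :=
  ∑' n : ℤ, cexp (π * I * ((n + p) ^ 2 * τ + 2 * n * q))

lemma thetaChar_eq_jacobiTheta₂ (p q : ℝ) (τ : ℂ) :
    thetaChar p q τ = cexp (π * I * p ^ 2 * τ) * jacobiTheta₂ (p * τ + q) τ := by
  rw [jacobiTheta₂, ← tsum_mul_left]
  refine tsum_congr fun n => ?_
  rw [jacobiTheta₂_term, ← Complex.exp_add]
  ring_nf

lemma thetaChar_add_int_right (p q : ℝ) (m : ℤ) (τ : ℂ) :
    thetaChar p (q + m) τ = thetaChar p q τ := by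
  refine tsum_congr fun n => ?_
  conv_rhs => rw [← cexp_pi_mul_I_add_two_mul_int _ (n * m)]
  push_cast
  ring_nf

lemma thetaChar_add_int_left (p q : ℝ) (m : ℤ) (τ : ℂ) :
    thetaChar (p + m) q τ = cexp (π * I * (-2 * m * q)) * thetaChar p q τ := by
  rw [thetaChar, thetaChar, ← tsum_mul_left, ← (Equiv.subRight m).tsum_eq]
  refine tsum_congr fun n => ?_
  rw [Equiv.subRight_apply, ← Complex.exp_add]
  push_cast
  ring_nf

lemma thetaChar_neg (p q : ℝ) (τ : ℂ) : thetaChar (-p) (-q) τ = thetaChar p q τ := by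
  rw [thetaChar, thetaChar, ← (Equiv.neg ℤ).tsum_eq]
  refine tsum_congr fun n => ?_
  rw [Equiv.neg_apply]
  push_cast
  ring_nf

/-- The `n`-th term picks up `exp(π i k n²) = exp(π i k n)` since `n² - n` is even. -/
lemma thetaChar_add_int (p q : ℝ) (k : ℤ) (τ : ℂ) :
    thetaChar p q (τ + k) = cexp (π * I * (k * p ^ 2)) * thetaChar p (q + k * p + k / 2) τ := by
  rw [thetaChar, thetaChar, ← tsum_mul_left]
  refine tsum_congr fun n => ?_
  obtain ⟨m, hm⟩ := Int.even_mul_pred_self n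
  rw [← Complex.exp_add, ← cexp_pi_mul_I_add_two_mul_int _ (-(k * m))]
  have hm' : (n : ℂ) * (n - 1) = m + m := by exact_mod_cast hm
  push_cast
  congr 1
  linear_combination (π * I * k) * hm'

lemma thetaChar_neg_inv (p q : ℝ) {τ : ℂ} (hτ : 0 < τ.im) :
    thetaChar p q (-1 / τ) =
      (-I * τ) ^ (1 / 2 : ℂ) * cexp (π * I * (-2 * p * q)) * thetaChar q (-p) τ := by
  have hτ0 : τ ≠ 0 := fun h => by simp [h] at hτ
  have hFE := jacobiTheta₂_functional_equation (q * τ - p) τ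
  rw [show ((q : ℂ) * τ - p) / τ = p * (-1 / τ) + q by field_simp; ring] at hFE
  have hFE' : jacobiTheta₂ (p * (-1 / τ) + q) (-1 / τ) =
      (-I * τ) ^ (1 / 2 : ℂ) * cexp (π * I * (q * τ - p) ^ 2 / τ) * jacobiTheta₂ (q * τ - p) τ := by
    rw [hFE, show -π * I * ((q : ℂ) * τ - p) ^ 2 / τ = -(π * I * (q * τ - p) ^ 2 / τ) by ring,
      Complex.exp_neg]
    field_simp
  have hexp : cexp (π * I * p ^ 2 * (-1 / τ)) * cexp (π * I * (q * τ - p) ^ 2 / τ) =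
      cexp (π * I * (-2 * p * q)) * cexp (π * I * q ^ 2 * τ) := by
    rw [← Complex.exp_add, ← Complex.exp_add]
    congr 1
    field_simp
    ring
  rw [thetaChar_eq_jacobiTheta₂, thetaChar_eq_jacobiTheta₂, hFE', ofReal_neg, ← sub_eq_add_neg]
  linear_combination ((-I * τ) ^ (1 / 2 : ℂ) * jacobiTheta₂ (q * τ - p) τ) * hexp

section Mobius

variable {a b c d : ℤ}

lemma denom_ne_zero_of_det (h : a * d - b * c = 1) {τ : ℂ} (hτ : 0 < τ.im) :
    (c : ℂ) * τ + d ≠ 0 := by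
  intro h0
  obtain rfl : c = 0 := by simpa [hτ.ne'] using congrArg Complex.im h0
  obtain rfl : d = 0 := by simpa using h0
  simp at h

lemma im_mobius_pos (h : a * d - b * c = 1) {τ : ℂ} (hτ : 0 < τ.im) :
    0 < (((a : ℂ) * τ + b) / (c * τ + d)).im := by
  have hdet : (a : ℝ) * d - b * c = 1 := by exact_mod_cast h
  have him : (((a : ℂ) * τ + b) / (c * τ + d)).im = τ.im / Complex.normSq (c * τ + d) := by
    rw [Complex.div_im, div_sub_div_same]
    congr 1
    simp only [add_re, add_im, mul_re, mul_im, intCast_re, intCast_im]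
    linear_combination τ.im * hdet
  rw [him]
  exact div_pos hτ (Complex.normSq_pos.mpr (denom_ne_zero_of_det h hτ))

end Mobius

def thetaPhase (a b c d : ℤ) (p q : ℝ) : ℝ :=
  a * b * p ^ 2 + 2 * b * c * p * q + c * d * q ^ 2 + a * b * c * p + a * c * d * q

def ThetaCharTransforms (a b c d : ℤ) : Prop :=
  ∃ (u : ℂ → ℂ) (m : ℤ), ∀ (p q : ℝ) (τ : ℂ), 0 < τ.im →
    thetaChar p q ((a * τ + b) / (c * τ + d)) =
      u τ * cexp (π * I * thetaPhase a b c d p q) *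
        thetaChar (a * p + c * q + a * c / 2) (b * p + d * q + b * d / 2 + m) τ

namespace ThetaCharTransforms

variable {a b c d : ℤ}

lemma of_c_eq_zero (h : a * d = 1) : ThetaCharTransforms a b 0 d := by
  rcases Int.mul_eq_one_iff_eq_one_or_neg_one.mp h with ⟨rfl, rfl⟩ | ⟨rfl, rfl⟩
  · refine ⟨1, 0, fun p q τ _ => ?_⟩
    rw [show (((1 : ℤ) : ℂ) * τ + b) / (((0 : ℤ) : ℂ) * τ + ((1 : ℤ) : ℂ)) = τ + b by simp,
      thetaChar_add_int]
    simp only [thetaPhase, Pi.one_apply, one_mul]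
    push_cast
    ring_nf
  · refine ⟨1, b, fun p q τ _ => ?_⟩
    rw [show (((-1 : ℤ) : ℂ) * τ + b) / (((0 : ℤ) : ℂ) * τ + ((-1 : ℤ) : ℂ)) = τ + (-b : ℤ) by
        push_cast; ring,
      thetaChar_add_int, ← thetaChar_neg]
    simp only [thetaPhase, Pi.one_apply, one_mul]
    push_cast
    ring_nf

lemma T_zpow_mul_S_mul (k : ℤ) (h : a * d - b * c = 1)
    (H : ThetaCharTransforms c d (k * c - a) (k * d - b)) : ThetaCharTransforms a b c d := by
  obtain ⟨u', m', H'⟩ := H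
  obtain ⟨c₂, hc₂⟩ := Int.even_mul_succ_self c
  obtain ⟨d₂, hd₂⟩ := Int.even_mul_succ_self d
  have h' : c * (k * d - b) - d * (k * c - a) = 1 := by linear_combination h
  set j : ℤ := k * c₂ - a * c with hj
  set m : ℤ := m' + k * d₂ - b * d with hm
  set w : ℂ → ℂ := fun τ => (c * τ + d) / ((k * c - a : ℤ) * τ + (k * d - b : ℤ)) with hw
  -- the accumulated phase at the characteristic `(0, 0)`; the rest of it is `thetaPhase a b c d`
  set C : ℝ := thetaPhase c d (k * c - a) (k * d - b) (k / 2) 0 - 2 * j * (b * d / 2 + m) with hC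
  refine ⟨fun τ => (-I * w τ) ^ (1 / 2 : ℂ) * u' τ * cexp (π * I * C), m, fun p q τ hτ => ?_⟩
  have hγ : ((a : ℂ) * τ + b) / (c * τ + d) = -1 / w τ + k := by
    have h₁ := denom_ne_zero_of_det h hτ
    rw [div_eq_iff h₁, hw, neg_div, one_div_div, add_mul, neg_mul, div_mul_cancel₀ _ h₁]
    push_cast
    ring
  have hc₂' : (c : ℝ) * (c + 1) = c₂ + c₂ := by exact_mod_cast hc₂
  have hd₂' : (d : ℝ) * (d + 1) = d₂ + d₂ := by exact_mod_cast hd₂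
  have hchar₁ : c * (q + k * p + k / 2) + ((k * c - a : ℤ) : ℝ) * (-p)
      + c * ((k * c - a : ℤ) : ℝ) / 2 = a * p + c * q + a * c / 2 + j := by
    rw [hj]
    push_cast
    linear_combination (k / 2 : ℝ) * hc₂'
  have hchar₂ : d * (q + k * p + k / 2) + ((k * d - b : ℤ) : ℝ) * (-p)
      + d * ((k * d - b : ℤ) : ℝ) / 2 + m' = b * p + d * q + b * d / 2 + m := by
    rw [hm]
    push_cast
    linear_combination (k / 2 : ℝ) * hd₂'
  have hphase : k * p ^ 2 + -2 * p * (q + k * p + k / 2)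
      + thetaPhase c d (k * c - a) (k * d - b) (q + k * p + k / 2) (-p)
      + -2 * j * (b * p + d * q + b * d / 2 + m) = C + thetaPhase a b c d p q := by
    have hdet : (a : ℝ) * d - b * c = 1 := by exact_mod_cast h
    simp only [hC, thetaPhase, hj, hm]
    push_cast
    linear_combination (2 * p * q + k * p + k * p ^ 2) * hdet + (k * p * b + k * q * d) * hc₂'
  rw [hγ, thetaChar_add_int, thetaChar_neg_inv _ _ (im_mobius_pos h' hτ), H' _ _ τ hτ, hchar₁,
    hchar₂, thetaChar_add_int_left]
  have hexp : cexp (π * I * (k * p ^ 2)) * cexp (π * I * (-2 * p * ((q + k * p + k / 2 : ℝ) : ℂ)))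
      * cexp (π * I * thetaPhase c d (k * c - a) (k * d - b) (q + k * p + k / 2) (-p))
      * cexp (π * I * (-2 * j * ((b * p + d * q + b * d / 2 + m : ℝ) : ℂ)))
      = cexp (π * I * C) * cexp (π * I * thetaPhase a b c d p q) := by
    simp only [← Complex.exp_add, ← mul_add, ← ofReal_add, ← hphase]
    push_cast
    ring
  linear_combination ((-I * w τ) ^ (1 / 2 : ℂ) * u' τ
    * thetaChar (a * p + c * q + a * c / 2) (b * p + d * q + b * d / 2 + m) τ) * hexp

end ThetaCharTransforms

/-- Euclid's algorithm on the lower row: `(a b; c d) = Tᵏ S (c d; kc - a kd - b)` with `k = a / c`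
strictly decreases `|c|`. -/
theorem thetaCharTransforms {a b c d : ℤ} (h : a * d - b * c = 1) :
    ThetaCharTransforms a b c d := by
  induction hn : c.natAbs using Nat.strong_induction_on generalizing a b c d with
  | _ n ih =>
  rcases eq_or_ne c 0 with rfl | hc
  · exact .of_c_eq_zero (by linarith)
  · refine .T_zpow_mul_S_mul (a / c) h (ih _ ?_ (by linear_combination h) rfl)
    rw [← hn, show a / c * c - a = -(a % c) by rw [Int.emod_def]; ring, Int.natAbs_neg,
      ← Int.natAbs_abs c]
    exact Int.natAbs_lt_natAbs_of_nonneg_of_lt (Int.emod_nonneg a hc) (Int.emod_lt_abs a hc)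

def halfCharPhase (a b : ℤ) (p : ℝ) : ℝ := a * b * p ^ 2 - (a - 1) * p

lemma thetaChar_half_transform {a b c d : ℤ} (h : a * d - b * c = 1) (hb : Even b) (hc : Even c) :
    ∃ v : ℂ → ℂ, ∀ (p : ℝ) (τ : ℂ), 0 < τ.im →
      (∃ k : ℤ, ((a : ℝ) - 1) * p = k) → (∃ k : ℤ, (b : ℝ) * p = k) →
      thetaChar p (1 / 2) ((a * τ + b) / (c * τ + d)) =
        v τ * cexp (π * I * halfCharPhase a b p) * thetaChar p (1 / 2) τ := by
  obtain ⟨u, m, H⟩ := thetaCharTransforms h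
  obtain ⟨b', hb'⟩ := hb
  obtain ⟨c', hc'⟩ := hc
  obtain ⟨d', hd'⟩ : Odd d := (Int.odd_mul.mp (by
    rw [show a * d = 2 * (b' * c) + 1 by linear_combination h + c * hb']
    exact odd_two_mul_add_one _)).2
  have hb'ℝ : (b : ℝ) = b' + b' := by exact_mod_cast hb'
  have hc'ℝ : (c : ℝ) = c' + c' := by exact_mod_cast hc'
  have hd'ℝ : (d : ℝ) = 2 * d' + 1 := by exact_mod_cast hd'
  refine ⟨fun τ => u τ * cexp (π * I * (c * d * (1 + 2 * a) / 4 - c * (1 + a) / 2)),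
    fun p τ hτ ⟨k₁, hk₁⟩ ⟨k₂, hk₂⟩ => ?_⟩
  set J₁ : ℤ := k₁ + c' * (a + 1) with hJ₁
  set J₂ : ℤ := k₂ + d' + b' * d + m with hJ₂
  have hchar₁ : a * p + c * (1 / 2) + a * c / 2 = p + J₁ := by
    push_cast [hJ₁]
    linear_combination hk₁ + (1 + a) / 2 * hc'ℝ
  have hchar₂ : b * p + d * (1 / 2) + b * d / 2 + m = 1 / 2 + J₂ := by
    push_cast [hJ₂]
    linear_combination hk₂ + hd'ℝ / 2 + d / 2 * hb'ℝ
  rw [H p (1 / 2) τ hτ, hchar₁, hchar₂, thetaChar_add_int_left, thetaChar_add_int_right]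
  have hexp : cexp (π * I * thetaPhase a b c d p (1 / 2))
      * cexp (π * I * (-2 * J₁ * ((1 / 2 + J₂ : ℝ) : ℂ)))
      = cexp (π * I * (c * d * (1 + 2 * a) / 4 - c * (1 + a) / 2))
        * cexp (π * I * halfCharPhase a b p) := by
    rw [← cexp_pi_mul_I_add_two_mul_int _ (J₁ * J₂ - k₂ * c' * (1 + a))]
    simp only [← Complex.exp_add, ← mul_add]
    congr 2
    have hk₁ℂ : ((a : ℂ) - 1) * p = k₁ := by exact_mod_cast hk₁
    have hk₂ℂ : (b : ℂ) * p = k₂ := by exact_mod_cast hk₂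
    have hc'ℂ : (c : ℂ) = c' + c' := by exact_mod_cast hc'
    push_cast [thetaPhase, halfCharPhase, hJ₁, hJ₂]
    linear_combination (1 + a) * c * hk₂ℂ + hk₁ℂ + ((1 + a) * k₂ + (1 + a) / 2) * hc'ℂ
  linear_combination (u τ * thetaChar p (1 / 2) τ) * hexp

section LevelEighteenDSq

variable {D : ℕ}

lemma exists_int_eq_mul_div_of_dvd (hD : D ≠ 0) {n : ℤ} (hn : 18 * (D : ℤ) ^ 2 ∣ n) (g : ℤ) :
    ∃ k : ℤ, (n : ℝ) * (g / (6 * D)) = k := by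
  obtain ⟨n', rfl⟩ := hn
  refine ⟨3 * D * n' * g, ?_⟩
  push_cast
  field_simp
  ring

lemma cexp_halfCharPhase_eq_of_even_sub (hD : D ≠ 0) {a b : ℤ} (ha : 18 * (D : ℤ) ^ 2 ∣ a - 1)
    (hb : 18 * (D : ℤ) ^ 2 ∣ b) {g₀ g₁ : ℤ} (hg : Even (g₁ - g₀)) :
    cexp (π * I * halfCharPhase a b (g₁ / (6 * D))) =
      cexp (π * I * halfCharPhase a b (g₀ / (6 * D))) := by
  obtain ⟨a', ha'⟩ := ha
  obtain rfl : a = 18 * D ^ 2 * a' + 1 := eq_add_of_sub_eq ha'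
  obtain ⟨b', rfl⟩ := hb
  obtain ⟨h, hh⟩ := hg
  obtain rfl : g₁ = g₀ + 2 * h := by linear_combination hh
  conv_rhs => rw [← cexp_pi_mul_I_add_two_mul_int _
    ((18 * D ^ 2 * a' + 1) * b' * h * (g₀ + h) - 3 * D * a' * h)]
  congr 2
  push_cast [halfCharPhase]
  field_simp
  ring

end LevelEighteenDSq

lemma thetaChar_half_eq_tsum (p : ℝ) (τ : ℂ) :
    thetaChar p (1 / 2) τ = ∑' n : ℤ, (-1 : ℂ) ^ n * cexp (π * I * (n + p) ^ 2 * τ) := by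
  refine tsum_congr fun n => ?_
  rw [show π * I * ((n + p) ^ 2 * τ + 2 * n * ((1 / 2 : ℝ) : ℂ))
      = π * I * (n + p) ^ 2 * τ + n * (π * I) by push_cast; ring,
    Complex.exp_add, Complex.exp_int_mul, Complex.exp_pi_mul_I, mul_comm]

lemma thetaRMu_eq_thetaChar (D : ℕ) (r : ℤ) (μ : ℝ) (z : ℂ) :
    thetaRMu D r μ z = thetaChar (r / D - μ) (1 / 2) z := by
  rw [thetaChar_half_eq_tsum, thetaRMu]
  push_cast
  simp only [add_sub_assoc]

lemma theta0_eq_thetaChar (z : ℂ) : theta0 z = thetaChar (-(1 / 6)) (1 / 2) z := by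
  rw [thetaChar_half_eq_tsum, theta0]
  push_cast
  simp only [sub_eq_add_neg]

theorem thetaRMu_ratio_Gamma_invariant_general (D : ℕ) (hD : 0 < D) (r : ℤ) (μ : ℝ)
    (hμ : μ = 1/2 ∨ μ = 1/6) (a b c d : ℤ) (hdet : a * d - b * c = 1)
    (ha : (18 * (D : ℤ) ^ 2) ∣ (a - 1))
    (hb : (18 * (D : ℤ) ^ 2) ∣ b) (hc : (18 * (D : ℤ) ^ 2) ∣ c)
    (z : ℂ) (hz : 0 < z.im) :
    thetaRMu D r μ (((a : ℂ) * z + (b : ℂ)) / ((c : ℂ) * z + (d : ℂ))) * theta0 z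
      = thetaRMu D r μ z * theta0 (((a : ℂ) * z + (b : ℂ)) / ((c : ℂ) * z + (d : ℂ))) := by
  have hD₀ : D ≠ 0 := hD.ne'
  have h2 : (2 : ℤ) ∣ 18 * (D : ℤ) ^ 2 := ⟨9 * D ^ 2, by ring⟩
  obtain ⟨v, hv⟩ := thetaChar_half_transform hdet (even_iff_two_dvd.mpr (h2.trans hb))
    (even_iff_two_dvd.mpr (h2.trans hc))
  obtain ⟨g, hg, hgD⟩ : ∃ g : ℤ, (r / D - μ : ℝ) = g / (6 * D) ∧ Even (g + D) := by
    rcases hμ with rfl | rfl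
    · exact ⟨6 * r - 3 * D, by push_cast; field_simp; ring, ⟨3 * r - D, by ring⟩⟩
    · exact ⟨6 * r - D, by push_cast; field_simp, ⟨3 * r, by ring⟩⟩
  have h₀ : (-(1 / 6) : ℝ) = ((-D : ℤ) : ℝ) / (6 * D) := by push_cast; field_simp
  have hv' (g' : ℤ) := hv (g' / (6 * D)) z hz
    (by exact_mod_cast exists_int_eq_mul_div_of_dvd hD₀ ha g')
    (exists_int_eq_mul_div_of_dvd hD₀ hb g')
  rw [thetaRMu_eq_thetaChar, thetaRMu_eq_thetaChar, theta0_eq_thetaChar, theta0_eq_thetaChar,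
    hg, h₀, hv', hv',
    cexp_halfCharPhase_eq_of_even_sub hD₀ ha hb (g₀ := -D) (by simpa [sub_neg_eq_add] using hgD)]
  ring

/-- The ratio `f_{r,μ} = θ_{r,μ}/θ₀` is invariant under the principal congruence
subgroup `Γ(18D²)`, stated without division: for `(a b; c d) ∈ SL₂(ℤ)` with
`a ≡ d ≡ 1` and `b ≡ c ≡ 0` modulo `18D²`,
`θ_{r,μ}(γz) θ₀(z) = θ_{r,μ}(z) θ₀(γz)`. -/
theorem thetaRMu_ratio_Gamma_invariant (D : ℕ) (hD : 0 < D) (r : ℤ) (μ : ℝ)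
    (hμ : μ = 1/2 ∨ μ = 1/6) (a b c d : ℤ) (hdet : a * d - b * c = 1)
    (ha : (18 * (D : ℤ) ^ 2) ∣ (a - 1)) (hd : (18 * (D : ℤ) ^ 2) ∣ (d - 1))
    (hb : (18 * (D : ℤ) ^ 2) ∣ b) (hc : (18 * (D : ℤ) ^ 2) ∣ c)
    (z : ℂ) (hz : 0 < z.im) :
    thetaRMu D r μ (((a : ℂ) * z + (b : ℂ)) / ((c : ℂ) * z + (d : ℂ))) * theta0 z
      = thetaRMu D r μ z * theta0 (((a : ℂ) * z + (b : ℂ)) / ((c : ℂ) * z + (d : ℂ))) :=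
  thetaRMu_ratio_Gamma_invariant_general D hD r μ hμ a b c d hdet ha hb hc z hz
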